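/- Let w be a fully commutative element of S_{n+1} and let i ∈ {1,…,n} be such that s_i occurs in some (equivalently, any) reduced expression of w. Then: (1) i ∈ I_w if and only if in any reduced expression of w there is no occurrence of s_{i+1} before the first occurrence of s_i; (2) i ∈ J_w if and only if in any reduced expression of w there is no occurrence of s_{i−1} after the last occurrence of s_i. -/

import Mathlib

/-!
Two letters `c` and `c + 1` never commute, so commutation moves do not change the subword
formed by the occurrences of `c` and `c + 1`; for a fully commutative element this subword is
therefore the same in all reduced expressions, and it suffices to read it off one normal form.

A normal form is obtained by taking, in the commutation class of a reduced expression, the word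
that is smallest when read as a base-2 numeral, and cutting it into maximal descending runs
`s_i s_{i-1} ⋯ s_j`. Between two consecutive runs there would otherwise be a commutable pair
`s_x s_y` with `y + 2 ≤ x` (contradicting minimality), a square `s_x s_x`, or two occurrences of
`s_x` separated by a single occurrence of a neighbour `s_{x±1}`, which after commutations gives a
braid `s_x s_{x±1} s_x` and contradicts full commutativity.

In a normal form, the first letter among `c, c + 1` is `c` exactly when some run starts at `c`,
and the last letter among `c, c + 1` is `c + 1` exactly when some run ends at `c + 1`.
-/

namespace NCTL

/-- 0-indexed simple reflection: letter `i` (with `0 ≤ i < n`) stands for the simple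
transposition `s_{i+1}` of the paper, i.e. the swap of the 0-indexed points `i` and `i+1`
of `Fin (n+1)` (which represent the points `i+1` and `i+2` of `{1,…,n+1}`). -/
def simpleRefl (n : ℕ) (i : ℕ) : Equiv.Perm (Fin (n + 1)) :=
  if h : i < n then Equiv.swap ⟨i, by omega⟩ ⟨i + 1, by omega⟩ else 1

/-- The permutation represented by a word in the letters. -/
def wordProd (n : ℕ) (l : List ℕ) : Equiv.Perm (Fin (n + 1)) :=
  (l.map (simpleRefl n)).prod

/-- A valid word in the letters `0,…,n-1`. -/
def IsWord (n : ℕ) (l : List ℕ) : Prop := ∀ a ∈ l, a < n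

/-- A standard Coxeter element: a product of all the simple reflections, each occurring
exactly once, in some order. -/
def IsStdCox (n : ℕ) (c : Equiv.Perm (Fin (n + 1))) : Prop :=
  ∃ l : List ℕ, l.Perm (List.range n) ∧ wordProd n l = c

def IsTransposition {α : Type*} [DecidableEq α] (σ : Equiv.Perm α) : Prop :=
  ∃ a b, a ≠ b ∧ σ = Equiv.swap a b

/-- Reflection length: the minimal number of transpositions needed to write `w`. -/
noncomputable def reflLength (n : ℕ) (w : Equiv.Perm (Fin (n + 1))) : ℕ :=
  sInf {k | ∃ l : List (Equiv.Perm (Fin (n + 1))),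
    l.length = k ∧ (∀ t ∈ l, IsTransposition t) ∧ l.prod = w}

/-- The absolute order `u ≤_T v`. -/
def absLe (n : ℕ) (u v : Equiv.Perm (Fin (n + 1))) : Prop :=
  reflLength n u + reflLength n (u⁻¹ * v) = reflLength n v

/-- The set of noncrossing partitions `NC(S_{n+1}, c)`. -/
def NC (n : ℕ) (c : Equiv.Perm (Fin (n + 1))) : Set (Equiv.Perm (Fin (n + 1))) :=
  {x | absLe n x c}

/-- A block of `x`: an orbit of `x` of cardinality at least 2 (recorded as a `Finset`). -/
def IsBlock (n : ℕ) (x : Equiv.Perm (Fin (n + 1))) (B : Finset (Fin (n + 1))) : Prop :=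
  ∃ a, x a ≠ a ∧ ∀ b, b ∈ B ↔ x.SameCycle a b

/-- `k` is the minimum of some block of `x`. -/
def IsBlockMin (n : ℕ) (x : Equiv.Perm (Fin (n + 1))) (k : Fin (n + 1)) : Prop :=
  ∃ B, IsBlock n x B ∧ k ∈ B ∧ ∀ j ∈ B, k ≤ j

/-- `k` is the maximum of some block of `x`. -/
def IsBlockMax (n : ℕ) (x : Equiv.Perm (Fin (n + 1))) (k : Fin (n + 1)) : Prop :=
  ∃ B, IsBlock n x B ∧ k ∈ B ∧ ∀ j ∈ B, j ≤ k

/-- `k` is nested in the block `B`: `k ∉ B` and `min B < k < max B`. -/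
def Nested (n : ℕ) (k : Fin (n + 1)) (B : Finset (Fin (n + 1))) : Prop :=
  k ∉ B ∧ (∃ a ∈ B, a < k) ∧ ∃ b ∈ B, k < b

open Classical in
/-- `D_x` : the support of `x` minus the set of minima of blocks of `x`. -/
noncomputable def Dset (n : ℕ) (x : Equiv.Perm (Fin (n + 1))) : Finset (Fin (n + 1)) :=
  x.support.filter fun k => ¬ IsBlockMin n x k

open Classical in
/-- `U_x` : the support of `x` minus the set of maxima of blocks of `x`. -/
noncomputable def Uset (n : ℕ) (x : Equiv.Perm (Fin (n + 1))) : Finset (Fin (n + 1)) :=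
  x.support.filter fun k => ¬ IsBlockMax n x k

/-- The set `I(n)` of pairs `(D, U)` with `|D| = |U|` and `d_i < u_i` for all `i`
(in the increasing enumerations). -/
def Iset (n : ℕ) : Set (Finset (Fin (n + 1)) × Finset (Fin (n + 1))) :=
  {p | ∃ h : p.1.card = p.2.card, ∀ i : Fin p.1.card,
    p.1.orderEmbOfFin rfl i < p.2.orderEmbOfFin h.symm i}

/-- `R_c = {c^m(1) : 0 ≤ m ≤ k₀}` where `k₀ ≥ 1` is minimal with `c^{k₀}(1) = n+1`
(0-indexed: `1 ↦ 0` and `n+1 ↦ Fin.last n`). -/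
def Rset (n : ℕ) (c : Equiv.Perm (Fin (n + 1))) : Set (Fin (n + 1)) :=
  {j | ∃ m : ℕ, (c ^ m) (0 : Fin (n + 1)) = j ∧
    ∀ m', 0 < m' → m' < m → (c ^ m') (0 : Fin (n + 1)) ≠ Fin.last n}

/-- `L_c = {1, n+1} ∪ ({1,…,n+1} \ R_c)` (0-indexed). -/
def Lset (n : ℕ) (c : Equiv.Perm (Fin (n + 1))) : Set (Fin (n + 1)) :=
  {0, Fin.last n} ∪ (Rset n c)ᶜ

open Classical in
/-- `M_x^c = D_x ∩ U_x ∩ L_c`. -/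
noncomputable def Mset (n : ℕ) (c x : Equiv.Perm (Fin (n + 1))) : Finset (Fin (n + 1)) :=
  (Dset n x ∩ Uset n x).filter fun k => k ∈ Lset n c

open Classical in
/-- `N_x^c` : indices in `L_c`, not in `supp(x)`, nested in at least one block of `x`. -/
noncomputable def Nnest (n : ℕ) (c x : Equiv.Perm (Fin (n + 1))) : Finset (Fin (n + 1)) :=
  Finset.univ.filter fun k =>
    k ∈ Lset n c ∧ k ∉ x.support ∧ ∃ B, IsBlock n x B ∧ Nested n k B

/-- `l` is a reduced expression of `w`. -/
def IsReduced (n : ℕ) (w : Equiv.Perm (Fin (n + 1))) (l : List ℕ) : Prop :=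
  IsWord n l ∧ wordProd n l = w ∧
    ∀ l', IsWord n l' → wordProd n l' = w → l.length ≤ l'.length

/-- A single commutation move `s_a s_b ↦ s_b s_a` (with `|a - b| ≥ 2`) on words. -/
def CommMove (l l' : List ℕ) : Prop :=
  ∃ (u v : List ℕ) (a b : ℕ), (a + 2 ≤ b ∨ b + 2 ≤ a) ∧
    l = u ++ a :: b :: v ∧ l' = u ++ b :: a :: v

/-- Fully commutative: any two reduced expressions are related by commutation moves. -/
def IsFC (n : ℕ) (w : Equiv.Perm (Fin (n + 1))) : Prop :=
  ∀ l l', IsReduced n w l → IsReduced n w l' → Relation.ReflTransGen CommMove l l'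

/-- `run i j = [i, i-1, …, j]` (for `j ≤ i`). -/
def run (i j : ℕ) : List ℕ := (List.range (i + 1 - j)).map fun t => i - t

/-- The word `(s_{i_1} ⋯ s_{j_1}) ⋯ (s_{i_k} ⋯ s_{j_k})` of normal-form shape. -/
def normalWord (k : ℕ) (i j : Fin k → ℕ) : List ℕ :=
  (List.ofFn fun m : Fin k => run (i m) (j m)).flatten

/-- The data `(k, i, j)` is the normal form of `w`. -/
def IsNormalFormOf (n : ℕ) (w : Equiv.Perm (Fin (n + 1))) (k : ℕ) (i j : Fin k → ℕ) : Prop :=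
  (∀ m, i m < n) ∧ (∀ m, j m ≤ i m) ∧ StrictMono i ∧ StrictMono j ∧
    IsReduced n w (normalWord k i j)

/-- A word of normal-form shape. -/
def NormalShape (n : ℕ) (l : List ℕ) : Prop :=
  ∃ (k : ℕ) (i j : Fin k → ℕ), (∀ m, i m < n) ∧ (∀ m, j m ≤ i m) ∧
    StrictMono i ∧ StrictMono j ∧ l = normalWord k i j

/-- `a ∈ I_w` (letters 0-indexed). -/
def memIset (n : ℕ) (w : Equiv.Perm (Fin (n + 1))) (a : ℕ) : Prop :=
  ∃ (k : ℕ) (i j : Fin k → ℕ), IsNormalFormOf n w k i j ∧ ∃ m, i m = a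

/-- `a ∈ J_w` (letters 0-indexed). -/
def memJset (n : ℕ) (w : Equiv.Perm (Fin (n + 1))) (a : ℕ) : Prop :=
  ∃ (k : ℕ) (i j : Fin k → ℕ), IsNormalFormOf n w k i j ∧ ∃ m, j m = a

/-- The characterizing property of the bijection `φ : NC(S_{n+1},c) → FC(S_{n+1})`. -/
def PhiCharOn (n : ℕ) (c : Equiv.Perm (Fin (n + 1)))
    (φ : Equiv.Perm (Fin (n + 1)) → Equiv.Perm (Fin (n + 1))) : Prop :=
  Set.BijOn φ (NC n c) {w | IsFC n w} ∧
  ∀ x ∈ NC n c, ∀ k : Fin (n + 1),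
    (memJset n (φ x) (k : ℕ) ↔
      (k ∈ Rset n c ∧ k ∈ Dset n x) ∨ (k ∈ Lset n c ∧ IsBlockMin n x k) ∨
      (k ∈ Lset n c ∧ k ∉ x.support ∧ ∃ B, IsBlock n x B ∧ Nested n k B)) ∧
    ((∃ a : ℕ, a + 1 = (k : ℕ) ∧ memIset n (φ x) a) ↔
      (k ∈ Rset n c ∧ k ∈ Uset n x) ∨ (k ∈ Lset n c ∧ IsBlockMax n x k) ∨
      (k ∈ Lset n c ∧ k ∉ x.support ∧ ∃ B, IsBlock n x B ∧ Nested n k B))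

/-- `(a,b)` is a bump of the block `B`. -/
def IsBump (n : ℕ) (a b : Fin (n + 1)) (B : Finset (Fin (n + 1))) : Prop :=
  a < b ∧ a ∈ B ∧ b ∈ B ∧ ∀ j ∈ B, ¬ (a < j ∧ j < b)

/-- `L` is a distinguished expression of the block `B` of `x`: it lists the bumps of `B`,
each exactly once, and its product (as transpositions) is the cycle of `x` on `B`. -/
def IsDistinguished (n : ℕ) (x : Equiv.Perm (Fin (n + 1))) (B : Finset (Fin (n + 1)))
    (L : List (Fin (n + 1) × Fin (n + 1))) : Prop :=
  L.Nodup ∧ (∀ p, p ∈ L ↔ IsBump n p.1 p.2 B) ∧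
    ∀ j, ((L.map fun p => Equiv.swap p.1 p.2).prod) j = if j ∈ B then x j else j

/-- The key ordering the blocks: the minimal `m ≥ 1` with `c^{-m}(n+1) = min B`. -/
noncomputable def blockKey (n : ℕ) (c : Equiv.Perm (Fin (n + 1)))
    (B : Finset (Fin (n + 1))) : ℕ :=
  sInf {m | 1 ≤ m ∧ ∃ b ∈ B, (∀ j ∈ B, b ≤ j) ∧ (c⁻¹ ^ m) (Fin.last n) = b}

/-- `L` encodes a standard form `m_x^c` of `x`: the list (in order) of the bumps whose
syllables, concatenated, give the standard form; the blocks are taken in increasing order,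
and a distinguished expression is used inside each block. -/
def IsStdFormData (n : ℕ) (c x : Equiv.Perm (Fin (n + 1)))
    (L : List (Fin (n + 1) × Fin (n + 1))) : Prop :=
  ∃ (Bs : List (Finset (Fin (n + 1)))) (Ls : List (List (Fin (n + 1) × Fin (n + 1)))),
    Bs.Nodup ∧ (∀ B, B ∈ Bs ↔ IsBlock n x B) ∧
    Bs.Chain' (fun B B' => blockKey n c B < blockKey n c B') ∧
    List.Forall₂ (IsDistinguished n x) Bs Ls ∧
    L = Ls.flatten

/-- The syllable of the transposition `(a, b)` (0-indexed points, `a < b`):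
the word `s_{b-1} ⋯ s_{a+1} s_a s_{a+1} ⋯ s_{b-1}` in 0-indexed letters. -/
def syllable (a b : ℕ) : List ℕ := run (b - 1) a ++ (run (b - 1) (a + 1)).reverse

/-- The word of the standard form encoded by `L` (concatenation of the syllables). -/
def stdWord (n : ℕ) (L : List (Fin (n + 1) × Fin (n + 1))) : List ℕ :=
  (L.map fun p => syllable (p.1 : ℕ) (p.2 : ℕ)).flatten

/-- The letter `t` is a center of (a syllable of) the standard form encoded by `L`. -/
def IsCenterOf (n : ℕ) (L : List (Fin (n + 1) × Fin (n + 1))) (t : ℕ) : Prop :=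
  ∃ p ∈ L, (p.1 : ℕ) = t

/-- The letter `t` occurs in the syllable of the bump `p`. -/
def occursIn (n : ℕ) (p : Fin (n + 1) × Fin (n + 1)) (t : ℕ) : Prop :=
  (p.1 : ℕ) ≤ t ∧ t < (p.2 : ℕ)

/-- The selection rule for the extracted word `w_x^c`: the letter `t` is taken from the
right part of the syllables in which it occurs twice. -/
def selRight (n : ℕ) (c : Equiv.Perm (Fin (n + 1)))
    (L : List (Fin (n + 1) × Fin (n + 1))) (t : ℕ) : Prop :=
  (IsCenterOf n L t ∧ ∃ h : t < n + 1, (⟨t, h⟩ : Fin (n + 1)) ∈ Rset n c) ∨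
  (¬ IsCenterOf n L t ∧ ∃ h : t < n + 1, (⟨t, h⟩ : Fin (n + 1)) ∈ Lset n c)

open Classical in
/-- The subword extracted from a single syllable: the center is kept, and any letter
occurring twice is kept from the left or right part according to `sel`. -/
noncomputable def extractSyllable (sel : ℕ → Prop) (a b : ℕ) : List ℕ :=
  (run (b - 1) a).filter (fun t => decide (t = a ∨ ¬ sel t)) ++
  ((run (b - 1) (a + 1)).reverse).filter fun t => decide (sel t)

/-- The extracted word `w_x^c`. -/
noncomputable def extractWord (n : ℕ) (c : Equiv.Perm (Fin (n + 1)))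
    (L : List (Fin (n + 1) × Fin (n + 1))) : List ℕ :=
  (L.map fun p => extractSyllable (selRight n c L) (p.1 : ℕ) (p.2 : ℕ)).flatten

section Positions

variable {α : Type*} {p : α → Bool} {x y : α}

lemma forall_getElem?_imp_exists_lt_iff (hxy : x ≠ y)
    (hp : ∀ t, p t ↔ t = x ∨ t = y) (l : List α) :
    (∀ k : ℕ, l[k]? = some y → ∃ q < k, l[q]? = some x) ↔ (l.filter p).head? ≠ some y := by
  induction l with
  | nil => simp
  | cons z l ih =>
    by_cases hzx : z = x
    · subst hzx
      simp only [List.filter_cons, (hp z).mpr (Or.inl rfl)]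
      refine iff_of_true (fun k hk => ?_) (by simpa using hxy)
      cases k with
      | zero => simp [hxy] at hk
      | succ k => exact ⟨0, by omega, rfl⟩
    by_cases hzy : z = y
    · subst hzy
      simp only [List.filter_cons, (hp z).mpr (Or.inr rfl)]
      refine iff_of_false (fun h => ?_) (by simp)
      obtain ⟨q, hq, -⟩ := h 0 rfl
      omega
    have hpz : ¬ p z := by simp [hp, hzx, hzy]
    rw [List.filter_cons_of_neg hpz, ← ih]
    constructor
    · intro h k hk
      obtain ⟨q, hq, hqx⟩ := h (k + 1) hk
      cases q with
      | zero => simp [hzx] at hqx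
      | succ q => exact ⟨q, by omega, hqx⟩
    · intro h k hk
      cases k with
      | zero => simp [hzy] at hk
      | succ k =>
        obtain ⟨q, hq, hqx⟩ := h k hk
        exact ⟨q + 1, by omega, hqx⟩

lemma forall_getElem?_imp_exists_gt_iff_reverse (l : List α) :
    (∀ k : ℕ, l[k]? = some y → ∃ q, k < q ∧ l[q]? = some x) ↔
      (∀ k : ℕ, l.reverse[k]? = some y → ∃ q < k, l.reverse[q]? = some x) := by
  have hlt : ∀ {k : ℕ} {z : α} {l : List α}, l[k]? = some z → k < l.length := fun h =>
    (List.getElem?_eq_some_iff.mp h).1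
  constructor
  · intro h k hk
    have hk' := hlt hk
    rw [List.length_reverse] at hk'
    rw [List.getElem?_reverse hk'] at hk
    obtain ⟨q, hkq, hq⟩ := h _ hk
    have := hlt hq
    refine ⟨l.length - 1 - q, by omega, ?_⟩
    rw [List.getElem?_reverse (by omega), show l.length - 1 - (l.length - 1 - q) = q by omega, hq]
  · intro h k hk
    have hk' := hlt hk
    have hk_rev : l.reverse[l.length - 1 - k]? = some y := by
      rw [List.getElem?_reverse (by omega), show l.length - 1 - (l.length - 1 - k) = k by omega, hk]
    obtain ⟨q, hqk, hq⟩ := h _ hk_rev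
    have := hlt hq
    rw [List.length_reverse] at this
    rw [List.getElem?_reverse this] at hq
    exact ⟨_, by omega, hq⟩

lemma forall_getElem?_imp_exists_gt_iff (hxy : x ≠ y)
    (hp : ∀ t, p t ↔ t = x ∨ t = y) (l : List α) :
    (∀ k : ℕ, l[k]? = some y → ∃ q, k < q ∧ l[q]? = some x) ↔ (l.filter p).getLast? ≠ some y := by
  rw [forall_getElem?_imp_exists_gt_iff_reverse, forall_getElem?_imp_exists_lt_iff hxy hp,
    List.filter_reverse, List.head?_reverse]

end Positions

open Relation

section Relations

variable (n : ℕ)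

lemma simpleRefl_mul_self (x : ℕ) : simpleRefl n x * simpleRefl n x = 1 := by
  unfold simpleRefl
  split <;> simp

lemma simpleRefl_commute {x y : ℕ} (hxy : x + 2 ≤ y ∨ y + 2 ≤ x) :
    simpleRefl n x * simpleRefl n y = simpleRefl n y * simpleRefl n x := by
  unfold simpleRefl
  split_ifs with hx hy
  · refine (Equiv.Perm.disjoint_swap_swap ?_).commute.eq
    simp only [List.nodup_cons, List.mem_cons, Fin.ext_iff, Nat.left_eq_add, one_ne_zero,
      List.not_mem_nil, or_false, false_or, not_or, Nat.add_right_cancel_iff, or_self,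
      not_false_eq_true, List.nodup_nil, and_self, and_true]
    omega
  all_goals simp

lemma simpleRefl_braid_succ {x : ℕ} (hx : x + 1 < n) :
    simpleRefl n x * simpleRefl n (x + 1) * simpleRefl n x
      = simpleRefl n (x + 1) * simpleRefl n x * simpleRefl n (x + 1) := by
  unfold simpleRefl
  rw [dif_pos (by omega), dif_pos hx]
  set a : Fin (n + 1) := ⟨x, by omega⟩
  set b : Fin (n + 1) := ⟨x + 1, by omega⟩
  set c : Fin (n + 1) := ⟨x + 2, by omega⟩
  have hab : a ≠ b := by simp [a, b, Fin.ext_iff]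
  have hbc : b ≠ c := by simp [b, c, Fin.ext_iff]
  have hac : a ≠ c := by simp [a, c, Fin.ext_iff]
  calc Equiv.swap a b * Equiv.swap b c * Equiv.swap a b
      = Equiv.swap b a * Equiv.swap c b * Equiv.swap b a := by
        rw [Equiv.swap_comm a b, Equiv.swap_comm b c]
    _ = Equiv.swap c a := by
        rw [Equiv.swap_mul_swap_mul_swap hbc.symm hac.symm, Equiv.swap_comm]
    _ = Equiv.swap b c * Equiv.swap a b * Equiv.swap b c :=
        (Equiv.swap_mul_swap_mul_swap hab hac).symm

lemma simpleRefl_braid {x y : ℕ} (hxy : x + 1 = y ∨ y + 1 = x) (hx : x < n) (hy : y < n) :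
    simpleRefl n x * simpleRefl n y * simpleRefl n x
      = simpleRefl n y * simpleRefl n x * simpleRefl n y := by
  rcases hxy with rfl | rfl
  · exact simpleRefl_braid_succ n hy
  · exact (simpleRefl_braid_succ n hx).symm

@[simp]
lemma wordProd_cons (x : ℕ) (l : List ℕ) :
    wordProd n (x :: l) = simpleRefl n x * wordProd n l := by
  simp [wordProd]

@[simp]
lemma wordProd_append (l l' : List ℕ) : wordProd n (l ++ l') = wordProd n l * wordProd n l' := by
  simp [wordProd]

end Relations

section Commutation

lemma CommMove.symm {l l' : List ℕ} (h : CommMove l l') : CommMove l' l := by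
  obtain ⟨u, v, a, b, hab, rfl, rfl⟩ := h
  exact ⟨u, v, b, a, hab.symm, rfl, rfl⟩

lemma CommMove.perm {l l' : List ℕ} (h : CommMove l l') : l.Perm l' := by
  obtain ⟨u, v, a, b, -, rfl, rfl⟩ := h
  exact (List.Perm.swap b a v).append_left u

lemma CommMove.wordProd_eq (n : ℕ) {l l' : List ℕ} (h : CommMove l l') :
    wordProd n l = wordProd n l' := by
  obtain ⟨u, v, a, b, hab, rfl, rfl⟩ := h
  simp only [wordProd_append, wordProd_cons, ← mul_assoc, simpleRefl_commute n hab]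

lemma CommMove.filter_eq {p : ℕ → Bool} (hp : ∀ s t, p s → p t → s ≤ t + 1)
    {l l' : List ℕ} (h : CommMove l l') : l.filter p = l'.filter p := by
  obtain ⟨u, v, a, b, hab, rfl, rfl⟩ := h
  by_cases ha : p a <;> by_cases hb : p b
  · have := hp a b ha hb
    have := hp b a hb ha
    omega
  all_goals simp [ha, hb]

lemma reflTransGen_commMove_symm {l l' : List ℕ} (h : ReflTransGen CommMove l l') :
    ReflTransGen CommMove l' l := by
  induction h with
  | refl => rfl
  | tail _ hmove ih => exact ih.head hmove.symm

lemma reflTransGen_commMove_perm {l l' : List ℕ} (h : ReflTransGen CommMove l l') :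
    l.Perm l' := by
  induction h with
  | refl => rfl
  | tail _ hmove ih => exact ih.trans hmove.perm

lemma eq_of_reflTransGen_commMove {β : Type*} {f : List ℕ → β}
    (hf : ∀ l l', CommMove l l' → f l = f l') {l l' : List ℕ}
    (h : ReflTransGen CommMove l l') : f l = f l' := by
  induction h with
  | refl => rfl
  | tail _ hmove ih => exact ih.trans (hf _ _ hmove)

lemma reflTransGen_commMove_append_cons {x : ℕ} {u s v : List ℕ}
    (hs : ∀ y ∈ s, y + 2 ≤ x ∨ x + 2 ≤ y) :
    ReflTransGen CommMove (u ++ s ++ x :: v) (u ++ x :: (s ++ v)) := by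
  induction s generalizing u with
  | nil => simp [ReflTransGen.refl]
  | cons y s ih =>
    have hmove : CommMove (u ++ y :: x :: (s ++ v)) (u ++ x :: y :: (s ++ v)) :=
      ⟨u, s ++ v, y, x, hs y (by simp), rfl, rfl⟩
    have := ih (u := u ++ [y]) (fun z hz => hs z (by simp [hz]))
    simp only [List.append_assoc, List.cons_append] at this ⊢
    exact this.tail hmove

end Commutation

section Reduced

variable {n : ℕ} {w : Equiv.Perm (Fin (n + 1))}

lemma IsReduced.of_length_eq {l l' : List ℕ} (hl : IsReduced n w l) (hword : IsWord n l')
    (hprod : wordProd n l' = w) (hlen : l'.length = l.length) : IsReduced n w l' :=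
  ⟨hword, hprod, fun l'' hw'' hprod'' => hlen ▸ hl.2.2 l'' hw'' hprod''⟩

lemma IsReduced.of_reflTransGen {l l' : List ℕ} (hl : IsReduced n w l)
    (h : ReflTransGen CommMove l l') : IsReduced n w l' :=
  have hp := reflTransGen_commMove_perm h
  hl.of_length_eq (fun x hx => hl.1 x (hp.mem_iff.mpr hx))
    ((eq_of_reflTransGen_commMove (fun _ _ => CommMove.wordProd_eq n) h).symm.trans hl.2.1)
    hp.length_eq.symm

lemma not_isReduced_append_cons_cons (u v : List ℕ) (x : ℕ) :
    ¬ IsReduced n w (u ++ x :: x :: v) := by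
  intro h
  have hprod : wordProd n (u ++ v) = w := by
    rw [← h.2.1]
    simp [← mul_assoc, simpleRefl_mul_self]
  have hword : IsWord n (u ++ v) := fun z hz =>
    h.1 z (by simp only [List.mem_append, List.mem_cons] at hz ⊢; tauto)
  have := h.2.2 (u ++ v) hword hprod
  simp at this

lemma IsFC.not_isReduced_braid (hw : IsFC n w) (u v : List ℕ) {x y : ℕ}
    (hxy : x + 1 = y ∨ y + 1 = x) : ¬ IsReduced n w (u ++ x :: y :: x :: v) := by
  intro h
  have hx : x < n := h.1 x (by simp)
  have hy : y < n := h.1 y (by simp)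
  have h' : IsReduced n w (u ++ y :: x :: y :: v) := by
    refine h.of_length_eq (fun z hz => h.1 z ?_) ?_ (by simp)
    · simp only [List.mem_append, List.mem_cons] at hz ⊢
      tauto
    · rw [← h.2.1]
      have := congrArg (wordProd n u * · * wordProd n v) (simpleRefl_braid n hxy hx hy)
      simpa only [wordProd_append, wordProd_cons, ← mul_assoc] using this.symm
  have hcount := (reflTransGen_commMove_perm (hw _ _ h h')).count_eq x
  have hne : x ≠ y := by omega
  simp [hne.symm] at hcount

lemma not_isReduced_of_commuting_between (u s v : List ℕ) {x : ℕ}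
    (hs : ∀ y ∈ s, y + 2 ≤ x ∨ x + 2 ≤ y) : ¬ IsReduced n w (u ++ x :: s ++ x :: v) := by
  intro h
  have hmove := reflTransGen_commMove_append_cons (u := u ++ [x]) (v := v) hs
  simp only [List.append_assoc, List.cons_append] at h hmove
  exact not_isReduced_append_cons_cons _ _ _ (h.of_reflTransGen hmove)

lemma IsFC.not_isReduced_of_single_neighbour_between (hw : IsFC n w) (u s₁ s₂ v : List ℕ)
    {x y : ℕ} (hxy : x + 1 = y ∨ y + 1 = x) (hs₁ : ∀ z ∈ s₁, z + 2 ≤ x ∨ x + 2 ≤ z)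
    (hs₂ : ∀ z ∈ s₂, z + 2 ≤ x ∨ x + 2 ≤ z) :
    ¬ IsReduced n w (u ++ x :: s₁ ++ y :: s₂ ++ x :: v) := by
  intro h
  have hmove₂ := reflTransGen_commMove_append_cons (u := u ++ x :: s₁ ++ [y]) (v := v) hs₂
  have hmove₁ := reflTransGen_commMove_symm
    (reflTransGen_commMove_append_cons (u := u) (v := y :: x :: (s₂ ++ v)) hs₁)
  simp only [List.append_assoc, List.cons_append] at h hmove₁ hmove₂
  have := (h.of_reflTransGen hmove₂).of_reflTransGen hmove₁
  exact hw.not_isReduced_braid (u ++ s₁) (s₂ ++ v) hxy (by simpa using this)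

end Reduced

section FarDescents

/-- Reads a word as a base-2 numeral with unbounded digits: moving a smaller letter to the
left across a larger one decreases it. -/
def wordWeight (l : List ℕ) : ℕ := l.foldl (fun s x => 2 * s + x) 0

lemma foldl_double_add_strictMono (v : List ℕ) :
    StrictMono fun s => v.foldl (fun s x => 2 * s + x) s := by
  induction v with
  | nil => exact strictMono_id
  | cons x v ih => exact fun s s' h => ih (by dsimp only; omega)

lemma wordWeight_swap_lt (u v : List ℕ) {x y : ℕ} (hyx : y < x) :
    wordWeight (u ++ y :: x :: v) < wordWeight (u ++ x :: y :: v) := by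
  simp only [wordWeight, List.foldl_append, List.foldl_cons]
  exact foldl_double_add_strictMono v (by omega)

lemma exists_reflTransGen_isChain (l : List ℕ) :
    ∃ m, ReflTransGen CommMove l m ∧ m.IsChain (fun x y => x < y + 2) := by
  obtain ⟨m, hm, hmin⟩ := (measure wordWeight).wf.has_min {m | ReflTransGen CommMove l m}
    ⟨l, ReflTransGen.refl⟩
  refine ⟨m, hm, List.isChain_iff_forall_rel_of_append_cons_cons.mpr ?_⟩
  intro x y u v hmuv
  by_contra! hyx
  have hmove : CommMove m (u ++ y :: x :: v) := ⟨u, v, x, y, Or.inr hyx, hmuv, rfl⟩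
  exact hmin _ (ReflTransGen.tail hm hmove) (hmuv ▸ wordWeight_swap_lt u v (by omega))

end FarDescents

section Runs

lemma mem_run {x i j : ℕ} : x ∈ run i j ↔ j ≤ x ∧ x ≤ i := by
  simp only [run, List.mem_map, List.mem_range]
  constructor
  · rintro ⟨t, ht, rfl⟩
    omega
  · rintro ⟨hj, hi⟩
    exact ⟨i - x, by omega, by omega⟩

lemma run_eq_nil {i j : ℕ} (h : i < j) : run i j = [] := by
  simp [run, show i + 1 - j = 0 by omega]

lemma run_self (i : ℕ) : run i i = [i] := by
  simp [run]

lemma run_succ {i j : ℕ} (h : j ≤ i + 1) : run (i + 1) j = (i + 1) :: run i j := by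
  rw [run, show i + 1 + 1 - j = (i + 1 - j) + 1 by omega, List.range_succ_eq_map]
  simp only [List.map_cons, Nat.sub_zero, List.map_map, run]
  congr 1
  exact List.map_congr_left fun t _ => by simp only [Function.comp_apply]; omega

lemma run_eq_cons {i j : ℕ} (h : j ≤ i) : ∃ t, run i j = i :: t ∧ ∀ x ∈ t, j ≤ x ∧ x < i := by
  cases i with
  | zero => exact ⟨[], by rw [show j = 0 by omega, run_self], by simp⟩
  | succ i => exact ⟨run i j, run_succ h, fun x hx => by have := mem_run.mp hx; omega⟩

lemma run_append_run {i c j : ℕ} (hjc : j ≤ c + 1) (hci : c ≤ i) :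
    run i (c + 1) ++ run c j = run i j := by
  induction i, hci using Nat.le_induction with
  | base => rw [run_eq_nil (Nat.lt_succ_self c), List.nil_append]
  | succ i hci ih => rw [run_succ (by omega), run_succ (by omega), List.cons_append, ih]

lemma run_append_singleton {i j : ℕ} (h : j ≤ i) : run i (j + 1) ++ [j] = run i j := by
  simpa only [run_self] using run_append_run (c := j) (j := j) (by omega) h

lemma head?_run {i j : ℕ} (h : j ≤ i) : (run i j).head? = some i := by
  obtain ⟨t, ht, -⟩ := run_eq_cons h
  simp [ht]

lemma getLast?_run {i j : ℕ} (h : j ≤ i) : (run i j).getLast? = some j := by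
  simp [← run_append_singleton h]

lemma pairwise_gt_run (i j : ℕ) : (run i j).Pairwise (· > ·) := by
  simp only [run, List.pairwise_map]
  exact List.pairwise_lt_range.imp_of_mem fun ha hb h => by
    simp only [List.mem_range] at ha hb
    omega

lemma filter_run (i j c d : ℕ) :
    (run i j).filter (fun t => decide (c ≤ t ∧ t ≤ d)) = run (min i d) (max j c) :=
  ((pairwise_gt_run i j).filter _).eq_of_mem_iff (pairwise_gt_run _ _) fun x => by
    simp only [List.mem_filter, mem_run, decide_eq_true_eq]
    omega

end Runs

section RunsWords

def runsWord (ps : List (ℕ × ℕ)) : List ℕ := (ps.map fun p => run p.1 p.2).flatten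

@[simp]
lemma runsWord_cons (p : ℕ × ℕ) (ps : List (ℕ × ℕ)) :
    runsWord (p :: ps) = run p.1 p.2 ++ runsWord ps := by
  simp [runsWord]

@[simp]
lemma runsWord_append (ps qs : List (ℕ × ℕ)) :
    runsWord (ps ++ qs) = runsWord ps ++ runsWord qs := by
  simp [runsWord]

lemma mem_runsWord {x : ℕ} {ps : List (ℕ × ℕ)} :
    x ∈ runsWord ps ↔ ∃ p ∈ ps, p.2 ≤ x ∧ x ≤ p.1 := by
  simp [runsWord, mem_run]

lemma filter_runsWord (c d : ℕ) (ps : List (ℕ × ℕ)) :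
    (runsWord ps).filter (fun t => decide (c ≤ t ∧ t ≤ d)) =
      runsWord (ps.map fun p => (min p.1 d, max p.2 c)) := by
  simp only [runsWord, List.filter_flatten, List.map_map, Function.comp_def, filter_run]

lemma normalWord_eq_runsWord (k : ℕ) (i j : Fin k → ℕ) :
    normalWord k i j = runsWord (List.ofFn fun m => (i m, j m)) := by
  simp [normalWord, runsWord, List.map_ofFn, Function.comp_def]

def IsNormalRuns (ps : List (ℕ × ℕ)) : Prop :=
  (∀ p ∈ ps, p.2 ≤ p.1) ∧ ps.Pairwise fun p q => p.1 < q.1 ∧ p.2 < q.2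

lemma exists_maximal_runs (l : List ℕ) :
    ∃ ps, runsWord ps = l ∧ (∀ p ∈ ps, p.2 ≤ p.1) ∧ ps.IsChain fun p q => p.2 ≠ q.1 + 1 := by
  induction l with
  | nil => exact ⟨[], rfl, by simp, .nil⟩
  | cons x l ih =>
    obtain ⟨ps, rfl, hle, hchain⟩ := ih
    rcases ps with _ | ⟨⟨i, j⟩, ps⟩
    · exact ⟨[(x, x)], by simp [run_self], by simp, .singleton _⟩
    have hji : j ≤ i := hle _ List.mem_cons_self
    by_cases hx : x = i + 1
    · subst hx
      refine ⟨(i + 1, j) :: ps, by simp [run_succ (show j ≤ i + 1 by omega)], ?_, ?_⟩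
      · simp only [List.mem_cons, forall_eq_or_imp] at hle ⊢
        exact ⟨by omega, hle.2⟩
      · cases ps with
        | nil => exact .singleton _
        | cons q ps => simpa using hchain
    · refine ⟨(x, x) :: (i, j) :: ps, by simp [run_self], ?_, .cons_cons hx hchain⟩
      simpa using hle

variable {n : ℕ} {w : Equiv.Perm (Fin (n + 1))}

lemma IsFC.lt_of_adjacent_runs (hw : IsFC n w) {A B : List ℕ} {i j i' j' : ℕ}
    (hred : IsReduced n w (A ++ run i j ++ run i' j' ++ B))
    (hchain : (A ++ run i j ++ run i' j' ++ B).IsChain fun x y => x < y + 2)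
    (hji : j ≤ i) (hj'i' : j' ≤ i') (hbreak : j ≠ i' + 1) : i < i' ∧ j < j' := by
  obtain ⟨t', ht', -⟩ := run_eq_cons hj'i'
  have hsplit : run i j = run i (j + 1) ++ [j] := (run_append_singleton hji).symm
  have hword : A ++ run i j ++ run i' j' ++ B = A ++ run i (j + 1) ++ j :: i' :: (t' ++ B) := by
    simp [hsplit, ht']
  have hnear : j < i' + 2 := by
    rw [hword] at hchain
    exact (List.isChain_append_cons_cons.mp hchain).2.1
  have hne : i' ≠ j := by
    rintro rfl
    refine not_isReduced_of_commuting_between (w := w) (A ++ run i (i' + 1)) [] (t' ++ B)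
      (x := i') (by simp) ?_
    rw [hword] at hred
    simpa using hred
  have hii' : i < i' := by
    by_contra! hi'i
    obtain ⟨c, rfl⟩ : ∃ c, i' = c + 1 := ⟨i' - 1, by omega⟩
    obtain ⟨t, ht, htmem⟩ := run_eq_cons (show j ≤ c by omega)
    have hrun : run i j = run i (c + 2) ++ (c + 1) :: c :: t := by
      rw [← run_append_run (c := c + 1) (by omega) hi'i, run_succ (by omega), ht]
    refine hw.not_isReduced_of_single_neighbour_between (A ++ run i (c + 2)) [] t (t' ++ B)
      (x := c + 1) (y := c) (Or.inr rfl) (by simp) (fun z hz => by have := htmem z hz; omega) ?_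
    simpa [hrun, ht'] using hred
  refine ⟨hii', ?_⟩
  by_contra! hj'j
  obtain ⟨t, ht, -⟩ := run_eq_cons hj'j
  have hrun : run i' j' = run i' (j + 2) ++ (j + 1) :: j :: t := by
    rw [← run_append_run (c := j + 1) (by omega) (by omega), run_succ (by omega), ht]
  refine hw.not_isReduced_of_single_neighbour_between (A ++ run i (j + 1)) (run i' (j + 2)) []
    (t ++ B) (x := j) (y := j + 1) (Or.inl rfl) (fun z hz => by have := mem_run.mp hz; omega)
    (by simp) ?_
  simpa [hsplit, hrun] using hred

lemma IsFC.isChain_lt_of_maximal_runs (hw : IsFC n w) {ps : List (ℕ × ℕ)} {A : List ℕ}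
    (hred : IsReduced n w (A ++ runsWord ps))
    (hchain : (A ++ runsWord ps).IsChain fun x y => x < y + 2) (hle : ∀ p ∈ ps, p.2 ≤ p.1)
    (hbreak : ps.IsChain fun p q => p.2 ≠ q.1 + 1) :
    ps.IsChain fun p q => p.1 < q.1 ∧ p.2 < q.2 := by
  induction ps generalizing A with
  | nil => exact .nil
  | cons p ps ih =>
    cases ps with
    | nil => exact .singleton _
    | cons q ps =>
      rw [List.isChain_cons_cons] at hbreak ⊢
      have hword :
          A ++ runsWord (p :: q :: ps) = A ++ run p.1 p.2 ++ run q.1 q.2 ++ runsWord ps := by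
        simp
      refine ⟨hw.lt_of_adjacent_runs (hword ▸ hred) (hword ▸ hchain) (hle p (by simp))
        (hle q (by simp)) hbreak.1, ih (A := A ++ run p.1 p.2) ?_ ?_ ?_ hbreak.2⟩
      · simpa using hred
      · simpa using hchain
      · exact fun r hr => hle r (List.mem_cons_of_mem _ hr)

lemma IsFC.exists_isNormalRuns (hw : IsFC n w) {l : List ℕ} (hl : IsReduced n w l) :
    ∃ ps, IsNormalRuns ps ∧ IsReduced n w (runsWord ps) := by
  obtain ⟨m, hlm, hchain⟩ := exists_reflTransGen_isChain l
  obtain ⟨ps, rfl, hle, hbreak⟩ := exists_maximal_runs m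
  have hred := hl.of_reflTransGen hlm
  have : Trans (fun p q : ℕ × ℕ => p.1 < q.1 ∧ p.2 < q.2)
      (fun p q : ℕ × ℕ => p.1 < q.1 ∧ p.2 < q.2) (fun p q : ℕ × ℕ => p.1 < q.1 ∧ p.2 < q.2) :=
    ⟨fun h₁ h₂ => ⟨h₁.1.trans h₂.1, h₁.2.trans h₂.2⟩⟩
  refine ⟨ps, ⟨hle, ?_⟩, hred⟩
  exact (hw.isChain_lt_of_maximal_runs (A := []) hred hchain hle hbreak).pairwise

lemma IsNormalRuns.isNormalFormOf {ps : List (ℕ × ℕ)} (hps : IsNormalRuns ps)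
    (hred : IsReduced n w (runsWord ps)) :
    IsNormalFormOf n w ps.length (fun r => ps[r].1) (fun r => ps[r].2) := by
  refine ⟨fun r => hred.1 _ ?_, fun r => hps.1 _ (List.getElem_mem _), fun r s hrs => ?_,
    fun r s hrs => ?_, ?_⟩
  · exact mem_runsWord.mpr ⟨_, List.getElem_mem _, hps.1 _ (List.getElem_mem _), le_rfl⟩
  · exact (List.pairwise_iff_getElem.mp hps.2 r s r.2 s.2 hrs).1
  · exact (List.pairwise_iff_getElem.mp hps.2 r s r.2 s.2 hrs).2
  · rw [normalWord_eq_runsWord]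
    convert hred
    exact List.ofFn_getElem

lemma IsNormalRuns.head?_filter_ne_iff {ps : List (ℕ × ℕ)} (hps : IsNormalRuns ps) {c : ℕ}
    (hc : c ∈ runsWord ps) :
    ((runsWord ps).filter fun t => decide (c ≤ t ∧ t ≤ c + 1)).head? ≠ some (c + 1) ↔
      ∃ p ∈ ps, p.1 = c := by
  obtain ⟨p, hp⟩ : ∃ p, ps.find? (fun p => decide (p.2 ≤ c ∧ c ≤ p.1)) = some p :=
    Option.isSome_iff_exists.mp (List.find?_isSome.mpr (by simpa using mem_runsWord.mp hc))
  obtain ⟨hpc, P, Q, rfl, hP⟩ := List.find?_eq_some_iff_append.mp hp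
  simp only [decide_eq_true_eq, Bool.not_eq_eq_eq_not, Bool.not_true,
    decide_eq_false_iff_not] at hpc hP
  have hPp : ∀ q ∈ P, q.1 < p.1 ∧ q.2 < p.2 := fun q hq =>
    (List.pairwise_append.mp hps.2).2.2 q hq p List.mem_cons_self
  have hpQ : ∀ q ∈ Q, p.1 < q.1 ∧ p.2 < q.2 :=
    (List.pairwise_cons.mp (List.pairwise_append.mp hps.2).2.1).1
  have hPnil : runsWord (P.map fun q => (min q.1 (c + 1), max q.2 c)) = [] := by
    simp only [runsWord, List.map_map, List.flatten_eq_nil_iff, List.mem_map]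
    rintro _ ⟨q, hq, rfl⟩
    exact run_eq_nil (by have := hP q hq; have := hPp q hq; dsimp only; omega)
  rw [filter_runsWord, List.map_append, List.map_cons, runsWord_append, hPnil, runsWord_cons,
    List.nil_append, List.head?_append, head?_run (by omega), Option.some_or, ne_eq,
    Option.some.injEq]
  constructor
  · exact fun h => ⟨p, by simp, by omega⟩
  · rintro ⟨q, hq, hqc⟩
    simp only [List.mem_append, List.mem_cons] at hq
    rcases hq with hq | rfl | hq
    · exact absurd ⟨hqc ▸ hps.1 q (by simp [hq]), hqc.ge⟩ (hP q hq)
    · omega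
    · have := hpQ q hq
      omega

lemma IsNormalRuns.getLast?_filter_ne_iff {ps : List (ℕ × ℕ)} (hps : IsNormalRuns ps) {c : ℕ}
    (hc : c + 1 ∈ runsWord ps) :
    ((runsWord ps).filter fun t => decide (c ≤ t ∧ t ≤ c + 1)).getLast? ≠ some c ↔
      ∃ p ∈ ps, p.2 = c + 1 := by
  obtain ⟨p, hp⟩ : ∃ p, ps.reverse.find? (fun p => decide (p.2 ≤ c + 1 ∧ c + 1 ≤ p.1)) = some p :=
    Option.isSome_iff_exists.mp (List.find?_isSome.mpr (by simpa using mem_runsWord.mp hc))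
  obtain ⟨hpc, Q', P', hrev, hQ⟩ := List.find?_eq_some_iff_append.mp hp
  obtain rfl : ps = P'.reverse ++ p :: Q'.reverse := by
    simpa using congrArg List.reverse hrev
  simp only [decide_eq_true_eq, Bool.not_eq_eq_eq_not, Bool.not_true,
    decide_eq_false_iff_not] at hpc hQ
  have hPp : ∀ q ∈ P'.reverse, q.1 < p.1 ∧ q.2 < p.2 := fun q hq =>
    (List.pairwise_append.mp hps.2).2.2 q hq p List.mem_cons_self
  have hpQ : ∀ q ∈ Q'.reverse, p.1 < q.1 ∧ p.2 < q.2 :=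
    (List.pairwise_cons.mp (List.pairwise_append.mp hps.2).2.1).1
  have hQnil : runsWord (Q'.reverse.map fun q => (min q.1 (c + 1), max q.2 c)) = [] := by
    simp only [runsWord, List.map_map, List.flatten_eq_nil_iff, List.mem_map]
    rintro _ ⟨q, hq, rfl⟩
    have := hQ q (List.mem_reverse.mp hq)
    have := hpQ q hq
    exact run_eq_nil (by dsimp only; omega)
  rw [filter_runsWord, List.map_append, List.map_cons, runsWord_append, runsWord_cons, hQnil,
    List.append_nil, List.getLast?_append, getLast?_run (by omega), Option.some_or, ne_eq,
    Option.some.injEq]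
  constructor
  · exact fun h => ⟨p, by simp, by omega⟩
  · rintro ⟨q, hq, hq2⟩
    simp only [List.mem_append, List.mem_cons] at hq
    rcases hq with hq | rfl | hq
    · have := hPp q hq
      omega
    · omega
    · exact absurd ⟨hq2.le, hq2 ▸ hps.1 q (by simp [hq])⟩ (hQ q (List.mem_reverse.mp hq))

lemma IsFC.filter_pair_eq (hw : IsFC n w) {l l' : List ℕ} (hl : IsReduced n w l)
    (hl' : IsReduced n w l') (c : ℕ) :
    l.filter (fun t => decide (c ≤ t ∧ t ≤ c + 1)) =
      l'.filter (fun t => decide (c ≤ t ∧ t ≤ c + 1)) :=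
  eq_of_reflTransGen_commMove (fun _ _ h => h.filter_eq fun s t hs ht => by
    simp only [decide_eq_true_eq] at hs ht
    omega) (hw l l' hl hl')

lemma IsNormalFormOf.isNormalRuns {k : ℕ} {i j : Fin k → ℕ} (h : IsNormalFormOf n w k i j) :
    IsNormalRuns (List.ofFn fun m => (i m, j m)) ∧
      IsReduced n w (runsWord (List.ofFn fun m => (i m, j m))) :=
  ⟨⟨by simpa [List.mem_ofFn] using h.2.1,
      List.pairwise_ofFn.mpr fun _ _ hrs => ⟨h.2.2.1 hrs, h.2.2.2.1 hrs⟩⟩,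
    normalWord_eq_runsWord k i j ▸ h.2.2.2.2⟩

variable {ps : List (ℕ × ℕ)}

lemma IsFC.memIset_iff (hw : IsFC n w) (hps : IsNormalRuns ps)
    (hred : IsReduced n w (runsWord ps)) {a : ℕ} (ha : a ∈ runsWord ps) :
    memIset n w a ↔ ∃ p ∈ ps, p.1 = a := by
  constructor
  · rintro ⟨k, i, j, hnf, m, rfl⟩
    obtain ⟨hqs, hred'⟩ := hnf.isNormalRuns
    have hmem : (i m, j m) ∈ List.ofFn fun m => (i m, j m) := List.mem_ofFn.mpr ⟨m, rfl⟩
    rw [← hps.head?_filter_ne_iff ha, hw.filter_pair_eq hred hred',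
      hqs.head?_filter_ne_iff (mem_runsWord.mpr ⟨_, hmem, hnf.2.1 m, le_rfl⟩)]
    exact ⟨_, hmem, rfl⟩
  · rintro ⟨p, hp, rfl⟩
    obtain ⟨r, hr, rfl⟩ := List.getElem_of_mem hp
    exact ⟨_, _, _, hps.isNormalFormOf hred, ⟨r, hr⟩, rfl⟩

lemma IsFC.memJset_succ_iff (hw : IsFC n w) (hps : IsNormalRuns ps)
    (hred : IsReduced n w (runsWord ps)) {c : ℕ} (hc : c + 1 ∈ runsWord ps) :
    memJset n w (c + 1) ↔ ∃ p ∈ ps, p.2 = c + 1 := by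
  constructor
  · rintro ⟨k, i, j, hnf, m, hm⟩
    obtain ⟨hqs, hred'⟩ := hnf.isNormalRuns
    have hmem : (i m, j m) ∈ List.ofFn fun m => (i m, j m) := List.mem_ofFn.mpr ⟨m, rfl⟩
    rw [← hps.getLast?_filter_ne_iff hc, hw.filter_pair_eq hred hred',
      hqs.getLast?_filter_ne_iff (mem_runsWord.mpr ⟨_, hmem, hm.le, hm ▸ hnf.2.1 m⟩)]
    exact ⟨_, hmem, hm⟩
  · rintro ⟨p, hp, hp2⟩
    obtain ⟨r, hr, rfl⟩ := List.getElem_of_mem hp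
    exact ⟨_, _, _, hps.isNormalFormOf hred, ⟨r, hr⟩, hp2⟩

lemma IsNormalRuns.memJset_zero (hps : IsNormalRuns ps) (hred : IsReduced n w (runsWord ps))
    (h : 0 ∈ runsWord ps) : memJset n w 0 := by
  obtain ⟨p, hp, hp2, -⟩ := mem_runsWord.mp h
  obtain ⟨r, hr, rfl⟩ := List.getElem_of_mem hp
  exact ⟨_, _, _, hps.isNormalFormOf hred, ⟨r, hr⟩, Nat.le_zero.mp hp2⟩

end RunsWords

/-- Letters are 0-indexed: `a` stands for `s_{a+1}`, `a + 1` for `s_{a+2}` and `b` with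
`b + 1 = a` for `s_a`. -/
theorem statement_7_general (n : ℕ) (w : Equiv.Perm (Fin (n + 1))) (hw : IsFC n w)
    (a : ℕ) (hocc : ∃ l, IsReduced n w l ∧ a ∈ l) :
    (memIset n w a ↔
      ∀ l, IsReduced n w l →
        ∀ p : ℕ, l[p]? = some (a + 1) → ∃ q < p, l[q]? = some a) ∧
    (memJset n w a ↔
      ∀ l, IsReduced n w l →
        ∀ p b : ℕ, b + 1 = a → l[p]? = some b → ∃ q, p < q ∧ l[q]? = some a) := by
  obtain ⟨l, hl, hal⟩ := hocc
  obtain ⟨ps, hps, hred⟩ := hw.exists_isNormalRuns hl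
  have ha : a ∈ runsWord ps := (reflTransGen_commMove_perm (hw l _ hl hred)).mem_iff.mp hal
  constructor
  · rw [hw.memIset_iff hps hred ha, ← hps.head?_filter_ne_iff ha]
    simp_rw [forall_getElem?_imp_exists_lt_iff (p := fun t => decide (a ≤ t ∧ t ≤ a + 1))
      (x := a) (y := a + 1) (by omega) fun t => by simp only [decide_eq_true_eq]; omega]
    exact ⟨fun h l hl => hw.filter_pair_eq hl hred a ▸ h, fun h => h _ hred⟩
  · cases a with
    | zero => exact iff_of_true (hps.memJset_zero hred ha) (by intros; omega)
    | succ c =>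
      rw [hw.memJset_succ_iff hps hred ha, ← hps.getLast?_filter_ne_iff ha]
      simp_rw [Nat.add_right_cancel_iff, forall_eq,
        forall_getElem?_imp_exists_gt_iff (p := fun t => decide (c ≤ t ∧ t ≤ c + 1))
          (x := c + 1) (y := c) (by omega) fun t => by simp only [decide_eq_true_eq]; omega]
      exact ⟨fun h l hl => hw.filter_pair_eq hl hred c ▸ h, fun h => h _ hred⟩

/-- characterization of membership in `I_w` and `J_w` via positions of
letters in reduced expressions (letters 0-indexed: `a` is the letter `s_{a+1}` of the
paper, so `a+1` is `s_{a+2}` and the letter `b` with `b + 1 = a` is `s_a`). -/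
theorem statement_7 (n : ℕ) (hn : 1 ≤ n) (w : Equiv.Perm (Fin (n + 1))) (hw : IsFC n w)
    (a : ℕ) (ha : a < n) (hocc : ∃ l, IsReduced n w l ∧ a ∈ l) :
    (memIset n w a ↔
      ∀ l, IsReduced n w l →
        ∀ p : ℕ, l[p]? = some (a + 1) → ∃ q < p, l[q]? = some a) ∧
    (memJset n w a ↔
      ∀ l, IsReduced n w l →
        ∀ p b : ℕ, b + 1 = a → l[p]? = some b → ∃ q, p < q ∧ l[q]? = some a) :=
  statement_7_general n w hw a hocc

end NCTL
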